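/- arXiv:2105.10855 — 2 statements merged into one kernel-verified Lean document; each statement's English description precedes it below -/
import Mathlib

section
/- Let u ∈ Mat_{2n}(E) be the block matrix [1_n, δ·1_n; 1_n, −δ·1_n]. Then u is invertible, and the map sending X ∈ Mat_{2n}(F) to u·X_E·u⁻¹, where X_E denotes the image of X under the entrywise inclusion of F into E, is an injective F-algebra homomorphism from Mat_{2n}(F) to Mat_{2n}(E) whose image is exactly S_n = {[A, B; B̄, Ā] : A, B ∈ Mat_n(E)}. In particular Mat_{2n}(F) and S_n are isomorphic as F-algebras, realizing the embedding GL_{2n}(F) ↪ GL_{2n}(E) whose image consists of invertible matrices of the form [A, B; B̄, Ā]. -/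
open Matrix

/-- with `u = [1, δ·1; 1, −δ·1]`, `u` is invertible and
`X ↦ u · X_E · u⁻¹` is an injective F-algebra homomorphism from `Mat_{2n}(F)`
to `Mat_{2n}(E)` with image exactly `S_n`. -/
theorem stmt_1 (F E : Type) [Field F] [CharZero F] [Field E] [Algebra F E]
    (δ : E) (hδ : δ ∉ Set.range (algebraMap F E)) (hδ2 : δ ^ 2 ∈ Set.range (algebraMap F E))
    (σ : E ≃ₐ[F] E) (hσδ : σ δ = -δ) (hσσ : ∀ x : E, σ (σ x) = x)
    (hfix : ∀ x : E, σ x = x → x ∈ Set.range (algebraMap F E))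
    (n : ℕ)
    (S : Set (Matrix (Fin n ⊕ Fin n) (Fin n ⊕ Fin n) E))
    (hS : S = {g | ∃ A B : Matrix (Fin n) (Fin n) E,
      g = fromBlocks A B (B.map σ) (A.map σ)})
    (u : Matrix (Fin n ⊕ Fin n) (Fin n ⊕ Fin n) E)
    (hu : u = fromBlocks 1 (δ • 1) 1 ((-δ) • 1))
    (φ : Matrix (Fin n ⊕ Fin n) (Fin n ⊕ Fin n) F →
      Matrix (Fin n ⊕ Fin n) (Fin n ⊕ Fin n) E)
    (hφ : ∀ X, φ X = u * X.map (algebraMap F E) * u⁻¹) :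
    IsUnit u ∧
    φ 1 = 1 ∧
    (∀ X Y, φ (X + Y) = φ X + φ Y) ∧
    (∀ X Y, φ (X * Y) = φ X * φ Y) ∧
    (∀ (c : F) (X), φ (c • X) = c • φ X) ∧
    Function.Injective φ ∧
    Set.range φ = S := by
  classical
  set f := algebraMap F E with hf
  have hδ0 : δ ≠ 0 := by
    rintro rfl
    exact hδ ⟨0, map_zero _⟩
  have h2 : (2 : E) ≠ 0 := by
    rw [show (2 : E) = algebraMap F E 2 from (map_ofNat (algebraMap F E) 2).symm]
    exact (map_ne_zero (algebraMap F E)).mpr two_ne_zero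
  have h2δ : (2 : E) * δ ≠ 0 := mul_ne_zero h2 hδ0
  -- the explicit right inverse
  set v : Matrix (Fin n ⊕ Fin n) (Fin n ⊕ Fin n) E :=
    ((2 : E) * δ)⁻¹ • fromBlocks (δ • 1) (δ • 1) 1 (-1) with hv
  have huv : u * v = 1 := by
    rw [hu, hv, Matrix.mul_smul, fromBlocks_multiply]
    have h11 : (1 : Matrix (Fin n) (Fin n) E) * (δ • 1) + (δ • 1) * 1 = ((2:E)*δ) • 1 := by
      simp [two_mul, add_smul]
    have h12 : (1 : Matrix (Fin n) (Fin n) E) * (δ • 1) + (δ • 1) * (-1) = 0 := by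
      simp
    have h21 : (1 : Matrix (Fin n) (Fin n) E) * (δ • 1) + ((-δ) • 1) * 1 = 0 := by
      simp
    have h22 : (1 : Matrix (Fin n) (Fin n) E) * (δ • 1) + ((-δ) • 1) * (-1) = ((2:E)*δ) • 1 := by
      simp [two_mul, add_smul]
    rw [h11, h12, h21, h22]
    rw [show (fromBlocks (((2:E)*δ) • (1 : Matrix (Fin n) (Fin n) E)) 0 0
        (((2:E)*δ) • (1 : Matrix (Fin n) (Fin n) E))) = ((2:E)*δ) • (1 : Matrix (Fin n ⊕ Fin n) (Fin n ⊕ Fin n) E) by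
      rw [← fromBlocks_one, fromBlocks_smul]; simp]
    rw [smul_smul, inv_mul_cancel₀ h2δ, one_smul]
  have hvu : v * u = 1 := mul_eq_one_comm.mp huv
  have hinv : u⁻¹ = v := inv_eq_right_inv huv
  have huu : u * u⁻¹ = 1 := by rw [hinv]; exact huv
  have hiu : u⁻¹ * u = 1 := by rw [hinv]; exact hvu
  have hunit : IsUnit u := ⟨⟨u, u⁻¹, huu, hiu⟩, rfl⟩
  have hcan1 : ∀ A : Matrix (Fin n ⊕ Fin n) (Fin n ⊕ Fin n) E, u⁻¹ * (u * A) = A := by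
    intro A; rw [← Matrix.mul_assoc, hiu, one_mul]
  have hcan2 : ∀ A : Matrix (Fin n ⊕ Fin n) (Fin n ⊕ Fin n) E, u * (u⁻¹ * A) = A := by
    intro A; rw [← Matrix.mul_assoc, huu, one_mul]
  -- map with σ as a ring hom
  have hσmul : ∀ {k l m : Type} [Fintype l] (M : Matrix k l E) (N : Matrix l m E),
      (M * N).map ⇑σ = M.map ⇑σ * N.map ⇑σ := by
    intro k l m _ M N
    exact Matrix.map_mul (f := (σ : E →+* E))
  have hσ1 : ∀ {k : Type} [DecidableEq k], (1 : Matrix k k E).map ⇑σ = 1 := by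
    intro k _
    exact Matrix.map_one _ (map_zero σ) (map_one σ)
  -- J
  set J : Matrix (Fin n ⊕ Fin n) (Fin n ⊕ Fin n) E := fromBlocks 0 1 1 0 with hJ
  have hJJ : J * J = 1 := by
    rw [hJ, fromBlocks_multiply]
    simp [fromBlocks_one]
  have hsm : (δ • (1 : Matrix (Fin n) (Fin n) E)).map ⇑σ = (-δ) • 1 := by
    ext i j
    by_cases h : i = j <;> simp [Matrix.map_apply, Matrix.one_apply, h, hσδ]
  have hsm' : ((-δ) • (1 : Matrix (Fin n) (Fin n) E)).map ⇑σ = δ • 1 := by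
    ext i j
    by_cases h : i = j <;> simp [Matrix.map_apply, Matrix.one_apply, h, hσδ]
  have huσ : u.map ⇑σ = J * u := by
    rw [hu, hJ, fromBlocks_map, fromBlocks_multiply, hσ1, hsm, hsm']
    simp
  have huiσ : u⁻¹.map ⇑σ = u⁻¹ * J := by
    have h1 : (J * u) * u⁻¹.map ⇑σ = 1 := by
      rw [← huσ, ← hσmul, huu, hσ1]
    have h2 : (J * u) * (u⁻¹ * J) = 1 := by
      calc (J * u) * (u⁻¹ * J) = J * (u * u⁻¹) * J := by noncomm_ring
        _ = 1 := by rw [huu, mul_one, hJJ]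
    have h3 : (u⁻¹ * J) * (J * u) = 1 := mul_eq_one_comm.mp h2
    calc u⁻¹.map ⇑σ = ((u⁻¹ * J) * (J * u)) * u⁻¹.map ⇑σ := by rw [h3, one_mul]
      _ = (u⁻¹ * J) * ((J * u) * u⁻¹.map ⇑σ) := by noncomm_ring
      _ = u⁻¹ * J := by rw [h1, mul_one]
  have hfσ : ∀ X : Matrix (Fin n ⊕ Fin n) (Fin n ⊕ Fin n) F,
      (X.map f).map ⇑σ = X.map f := by
    intro X
    ext i j
    simp [Matrix.map_apply, hf, σ.commutes]
  -- conjugation identity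
  have hconj : ∀ X, (φ X).map ⇑σ = J * φ X * J := by
    intro X
    rw [hφ, hσmul, hσmul, huσ, huiσ, hfσ]
    noncomm_ring
  -- characterization of S
  have hSchar : ∀ M : Matrix (Fin n ⊕ Fin n) (Fin n ⊕ Fin n) E,
      M ∈ S ↔ M.map ⇑σ = J * M * J := by
    intro M
    rw [hS]
    constructor
    · rintro ⟨A, B, rfl⟩
      have hBB : (B.map ⇑σ).map ⇑σ = B := by ext i j; simp [Matrix.map_apply, hσσ]
      have hAA : (A.map ⇑σ).map ⇑σ = A := by ext i j; simp [Matrix.map_apply, hσσ]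
      rw [hJ, fromBlocks_map, fromBlocks_multiply, fromBlocks_multiply, hBB, hAA]
      simp
    · intro h
      refine ⟨M.toBlocks₁₁, M.toBlocks₁₂, ?_⟩
      have hM := (fromBlocks_toBlocks M).symm
      rw [hM] at h
      rw [hJ, fromBlocks_map, fromBlocks_multiply, fromBlocks_multiply] at h
      simp only [Matrix.zero_mul, Matrix.mul_zero, Matrix.one_mul, Matrix.mul_one,
        add_zero, zero_add] at h
      have e21 : (M.toBlocks₂₁).map ⇑σ = M.toBlocks₁₂ := by
        have := congrArg Matrix.toBlocks₂₁ h
        simpa [toBlocks_fromBlocks₂₁] using this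
      have e22 : (M.toBlocks₂₂).map ⇑σ = M.toBlocks₁₁ := by
        have := congrArg Matrix.toBlocks₂₂ h
        simpa [toBlocks_fromBlocks₂₂] using this
      have e21' : M.toBlocks₂₁ = (M.toBlocks₁₂).map ⇑σ := by
        rw [← e21]; ext i j; simp [Matrix.map_apply, hσσ]
      have e22' : M.toBlocks₂₂ = (M.toBlocks₁₁).map ⇑σ := by
        rw [← e22]; ext i j; simp [Matrix.map_apply, hσσ]
      rw [← e21', ← e22']
      exact (fromBlocks_toBlocks M).symm
  -- homomorphism properties
  have hφ1 : φ 1 = 1 := by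
    rw [hφ, Matrix.map_one f (map_zero f) (map_one f), mul_one, huu]
  have hφadd : ∀ X Y, φ (X + Y) = φ X + φ Y := by
    intro X Y
    rw [hφ, hφ, hφ, Matrix.map_add f (map_add f) X Y, Matrix.mul_add, Matrix.add_mul]
  have hφmul : ∀ X Y, φ (X * Y) = φ X * φ Y := by
    intro X Y
    rw [hφ, hφ, hφ, Matrix.map_mul]
    simp only [Matrix.mul_assoc, hcan1, hcan2]
  have hφsmul : ∀ (c : F) (X), φ (c • X) = c • φ X := by
    intro c X
    have hm : (c • X).map f = c • X.map f := by
      ext i j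
      show f (c • X i j) = c • f (X i j)
      rw [smul_eq_mul, _root_.map_mul, Algebra.smul_def]
    rw [hφ, hφ, hm, _root_.Matrix.mul_smul, _root_.Matrix.smul_mul]
  have hφinj : Function.Injective φ := by
    intro X Y h
    rw [hφ, hφ] at h
    have h2' : X.map f = Y.map f := by
      have h3 := congrArg (fun M => u⁻¹ * (M * u)) h
      simpa only [Matrix.mul_assoc, hiu, Matrix.mul_one, hcan1] using h3
    exact Matrix.map_injective (f := ⇑f) f.injective h2'
  refine ⟨hunit, hφ1, hφadd, hφmul, hφsmul, hφinj, ?_⟩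
  ext M
  constructor
  · rintro ⟨X, rfl⟩
    exact (hSchar _).mpr (hconj X)
  · intro hM
    have hMJ : M.map ⇑σ = J * M * J := (hSchar _).mp hM
    set N : Matrix (Fin n ⊕ Fin n) (Fin n ⊕ Fin n) E := u⁻¹ * M * u with hN
    have hNσ : N.map ⇑σ = N := by
      rw [hN, hσmul, hσmul, huσ, huiσ, hMJ]
      calc u⁻¹ * J * (J * M * J) * (J * u)
          = u⁻¹ * (J * J) * M * (J * J) * u := by noncomm_ring
        _ = u⁻¹ * M * u := by rw [hJJ]; noncomm_ring
    have hNfix : ∀ i j, σ (N i j) = N i j := by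
      intro i j
      have := congrFun (congrFun hNσ i) j
      simpa [Matrix.map_apply] using this
    set X : Matrix (Fin n ⊕ Fin n) (Fin n ⊕ Fin n) F :=
      Matrix.of fun i j => (hfix (N i j) (hNfix i j)).choose with hX
    have hXmap : X.map f = N := by
      ext i j
      exact (hfix (N i j) (hNfix i j)).choose_spec
    refine ⟨X, ?_⟩
    rw [hφ, hXmap, hN]
    calc u * (u⁻¹ * M * u) * u⁻¹ = (u * u⁻¹) * M * (u * u⁻¹) := by noncomm_ring
      _ = M := by rw [huu]; noncomm_ring
end

section
/- (Guo's lemma on nilpotent twisted-conjugacy classes) Let x ∈ Mat_n(E) be such that x x̄ is nilpotent. Then there exists a ∈ GL_n(E) such that the twisted conjugate a x ā⁻¹ is in Jordan normal form; in particular a x ā⁻¹ is a nilpotent matrix all of whose entries lie in F, every entry equals 0 or 1, and its nonzero entries occur only in positions (i, i+1) (on the superdiagonal). -/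
open Submodule Module
section
variable {E : Type} [Field E] {V : Type} [AddCommGroup V] [Module E V] {σr : E →+* E}

/-- a chain for S : last-to-first, head in kernel -/
def chainP (S : V →ₛₗ[σr] V) (l : List V) : Prop :=
  (∀ a ∈ l.head?, S a = 0) ∧ l.Chain' (fun a b => S b = a)

lemma chain_get0 {S : V →ₛₗ[σr] V} {l : List V} (hc : chainP S l) (h : 0 < l.length) :
    S (l.get ⟨0, h⟩) = 0 := by
  apply hc.1
  cases l with
  | nil => simp at h
  | cons a t => simp

lemma chain_get_succ {S : V →ₛₗ[σr] V} {l : List V} (hc : chainP S l) {k : ℕ}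
    (h : k + 1 < l.length) :
    S (l.get ⟨k + 1, h⟩) = l.get ⟨k, by omega⟩ := by
  exact List.isChain_iff_getElem.mp hc.2 k (by omega)

lemma chain_pos {S : V →ₛₗ[σr] V} {l : List V} (hc : chainP S l) {v : V} (hv : v ∈ l)
    (hS : S v ≠ 0) :
    ∃ k, ∃ h : k + 1 < l.length, v = l.get ⟨k + 1, h⟩ ∧ S v = l.get ⟨k, by omega⟩ := by
  obtain ⟨⟨k, hk⟩, rfl⟩ := List.mem_iff_get.mp hv
  cases k with
  | zero => exact absurd (chain_get0 hc hk) hS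
  | succ k => exact ⟨k, hk, rfl, chain_get_succ hc hk⟩

lemma chain_inj {S : V →ₛₗ[σr] V} {l : List V} (hc : chainP S l) (hnd : l.Nodup) {v w : V}
    (hv : v ∈ l) (hw : w ∈ l) (hS : S v = S w) (h0 : S v ≠ 0) : v = w := by
  obtain ⟨k, hk, rfl, hSk⟩ := chain_pos hc hv h0
  obtain ⟨j, hj, rfl, hSj⟩ := chain_pos hc hw (hS ▸ h0)
  have : (⟨k, by omega⟩ : Fin l.length) = ⟨j, by omega⟩ :=
    List.nodup_iff_injective_get.mp hnd (by rw [← hSk, ← hSj, hS])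
  have : k = j := by simpa using this
  subst this; rfl

noncomputable def glast (l : List V) : V := l.getLast?.getD 0

lemma glast_get {l : List V} (h : l ≠ []) :
    glast l = l.get ⟨l.length - 1, by cases l <;> simp_all⟩ := by
  rw [glast, List.getLast?_eq_getLast h, Option.getD_some, List.getLast_eq_getElem]
  rfl

lemma glast_mem {l : List V} (h : l ≠ []) : glast l ∈ l := by
  rw [glast_get h]; exact List.get_mem _ _

lemma chain_surj {S : V →ₛₗ[σr] V} {l : List V} (hc : chainP S l) {u : V} (hu : u ∈ l) :
    u = glast l ∨ ∃ v ∈ l, S v = u := by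
  obtain ⟨⟨k, hk⟩, rfl⟩ := List.mem_iff_get.mp hu
  rcases eq_or_ne k (l.length - 1) with h | h
  · left; subst h; rw [glast_get (by rintro rfl; simp at hk)]
  · right
    have hk1 : k + 1 < l.length := by omega
    exact ⟨l.get ⟨k + 1, hk1⟩, List.get_mem _ _, chain_get_succ hc hk1⟩

/-- independent set, finset sum zero implies coefficients zero -/
lemma L3 {s : Set V} (hs : LinearIndependent E ((↑) : s → V)) (T : Finset V)
    (hT : ↑T ⊆ s) (c : V → E) (h : ∑ v ∈ T, c v • v = 0) : ∀ v ∈ T, c v = 0 := by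
  have h1 : LinearIndependent E ((↑) : (↑T : Set V) → V) := LinearIndepOn.mono (R := E) (v := id) hs hT
  intro v hv
  have h3 := linearIndependent_iff'.mp h1 Finset.univ (fun x => c x)
    (by rw [Finset.sum_finset_coe (fun v => c v • v) T]; exact h)
    ⟨v, by simpa using hv⟩ (Finset.mem_univ _)
  exact h3

/-- semilinear: if S ∘ f is independent then f is independent -/
lemma li_of_comp_sl {ι : Type} (S : V →ₛₗ[σr] V) (hσ : Function.Injective σr) {f : ι → V}
    (h : LinearIndependent E fun i => S (f i)) : LinearIndependent E f := by
  rw [linearIndependent_iff'] at h ⊢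
  intro t g hg i hi
  have h2 : ∑ i ∈ t, σr (g i) • S (f i) = 0 := by
    have : S (∑ i ∈ t, g i • f i) = 0 := by rw [hg, map_zero]
    rw [map_sum] at this
    simpa [LinearMap.map_smulₛₗ] using this
  have := h t (fun j => σr (g j)) h2 i hi
  exact hσ (by simpa using this)

lemma flatten_singletons (l : List V) : (l.map (fun v => ([v] : List V))).flatten = l := by
  induction l with
  | nil => simp
  | cons a t ih => simp [ih]

variable [FiniteDimensional E V]

theorem exists_chains [RingHomSurjective σr] (hσinj : Function.Injective σr)
    (S : V →ₛₗ[σr] V) (hnil : ∃ N, ∀ v : V, S^[N] v = 0) :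
    ∀ (m : ℕ) (W : Submodule E V), (∀ v ∈ W, S v ∈ W) → finrank E ↥W ≤ m →
    ∃ L : List (List V),
      (∀ l ∈ L, l ≠ [] ∧ chainP S l) ∧ L.flatten.Nodup ∧
      LinearIndependent E ((↑) : {v : V | v ∈ L.flatten} → V) ∧
      span E {v : V | v ∈ L.flatten} = W := by
  classical
  have hbot : ∀ W : Submodule E V, W = ⊥ → ∃ L : List (List V),
      (∀ l ∈ L, l ≠ [] ∧ chainP S l) ∧ L.flatten.Nodup ∧
      LinearIndependent E ((↑) : {v : V | v ∈ L.flatten} → V) ∧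
      span E {v : V | v ∈ L.flatten} = W := by
    intro W hW
    refine ⟨[], by simp, by simp, ?_, ?_⟩
    · have hset : {v : V | v ∈ ([] : List (List V)).flatten} = (∅ : Set V) := by simp
      rw [hset]
      exact linearIndependent_empty E V
    · have hset : {v : V | v ∈ ([] : List (List V)).flatten} = (∅ : Set V) := by simp
      rw [hset, span_empty, hW]
  intro m
  induction m with
  | zero =>
    intro W hinvW hm
    exact hbot W (Submodule.finrank_eq_zero.mp (Nat.le_zero.mp hm))
  | succ m ih =>
    intro W hinvW hm
    by_cases hWbot : W = ⊥
    · exact hbot W hWbot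
    -- U = S(W) is a proper invariant subspace
    set U : Submodule E V := Submodule.map S W with hUdef
    have hUle : U ≤ W := by
      rintro v hv
      obtain ⟨w, hw, rfl⟩ := Submodule.mem_map.mp hv
      exact hinvW w hw
    have hUne : U ≠ W := by
      intro hE
      have hiter : ∀ k, ∀ w ∈ W, ∃ w' ∈ W, S^[k] w' = w := by
        intro k
        induction k with
        | zero => exact fun w hw => ⟨w, hw, rfl⟩
        | succ k ihk =>
          intro w hw
          have hwU : w ∈ U := hE ▸ hw
          obtain ⟨w₁, hw₁, hSw₁⟩ := Submodule.mem_map.mp hwU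
          obtain ⟨w', hw', hS'⟩ := ihk w₁ hw₁
          refine ⟨w', hw', ?_⟩
          rw [Function.iterate_succ']
          simp only [Function.comp_apply, hS', hSw₁]
      obtain ⟨N, hN⟩ := hnil
      obtain ⟨w, hwW, hw0⟩ := Submodule.ne_bot_iff W |>.mp hWbot
      obtain ⟨w', _, hw'⟩ := hiter N w hwW
      exact hw0 (by rw [← hw', hN])
    have hUlt : U < W := lt_of_le_of_ne hUle hUne
    have hfr : finrank E ↥U ≤ m := by
      have := Submodule.finrank_lt_finrank_of_lt hUlt
      omega
    have hUinv : ∀ v ∈ U, S v ∈ U := fun v hv => Submodule.mem_map_of_mem (hUle hv)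
    obtain ⟨L₀, hL₀, hnd₀, hli₀, hsp₀⟩ := ih U hUinv hfr
    -- basic facts about J₀ = L₀.flatten
    have hJ₀mem : ∀ l ∈ L₀, ∀ v ∈ l, v ∈ L₀.flatten := fun l hl v hv =>
      List.mem_flatten.mpr ⟨l, hl, hv⟩
    have hmemU : ∀ v ∈ L₀.flatten, v ∈ U := fun v hv => hsp₀ ▸ subset_span hv
    have h0J₀ : (0 : V) ∉ L₀.flatten := fun h0 => hli₀.ne_zero ⟨0, h0⟩ rfl
    have hnodupL : ∀ l ∈ L₀, l.Nodup := fun l hl => (List.nodup_flatten.mp hnd₀).1 l hl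
    have hpair : ∀ l₁ ∈ L₀, ∀ l₂ ∈ L₀, l₁ = l₂ ∨ l₁.Disjoint l₂ := by
      intro l₁ h₁ l₂ h₂
      rcases eq_or_ne l₁ l₂ with h | h
      · exact Or.inl h
      · exact Or.inr (by
          haveI : Std.Symm (@List.Disjoint V) := ⟨fun a b hab => List.Disjoint.symm hab⟩
          exact (List.nodup_flatten.mp hnd₀).2.forall h₁ h₂ h)
    -- choice of preimages in W
    set pre : V → V := fun u => if h : ∃ w, w ∈ W ∧ S w = u then h.choose else 0 with hpredef
    have hpre : ∀ u ∈ U, pre u ∈ W ∧ S (pre u) = u := by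
      intro u hu
      obtain ⟨w, hw, hSw⟩ := Submodule.mem_map.mp hu
      have h : ∃ w, w ∈ W ∧ S w = u := ⟨w, hw, hSw⟩
      simp only [hpredef, dif_pos h]
      exact ⟨h.choose_spec.1, h.choose_spec.2⟩
    -- extension of chains
    set tp : List V → V := fun l => pre (glast l) with htpdef
    set ext : List V → List V := fun l => l ++ [tp l] with hextdef
    set L₁ := L₀.map ext with hL₁def
    -- per-chain facts
    have hgl : ∀ l ∈ L₀, glast l ∈ L₀.flatten := fun l hl =>
      hJ₀mem l hl _ (glast_mem (hL₀ l hl).1)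
    have hgl0 : ∀ l ∈ L₀, glast l ≠ 0 := fun l hl h0 => h0J₀ (h0 ▸ hgl l hl)
    have htpW : ∀ l ∈ L₀, tp l ∈ W := fun l hl => (hpre _ (hmemU _ (hgl l hl))).1
    have htpS : ∀ l ∈ L₀, S (tp l) = glast l := fun l hl => (hpre _ (hmemU _ (hgl l hl))).2
    have htp0 : ∀ l ∈ L₀, tp l ≠ 0 := by
      intro l hl h0
      apply hgl0 l hl
      rw [← htpS l hl, h0, map_zero]
    have hchext : ∀ l ∈ L₀, chainP S (ext l) := by
      intro l hl
      constructor
      · intro a ha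
        have hh : (ext l).head? = l.head? := by
          obtain ⟨x, xs, h⟩ := List.exists_cons_of_ne_nil (hL₀ l hl).1
          show (l ++ [tp l]).head? = l.head?
          rw [h]; simp
        rw [hh] at ha
        exact (hL₀ l hl).2.1 a ha
      · refine List.isChain_append.mpr ⟨(hL₀ l hl).2.2, List.isChain_singleton _, ?_⟩
        intro a ha b hb
        simp only [List.head?_cons, Option.mem_some_iff] at hb
        have hga : glast l = a := by
          rw [glast, Option.mem_def.mp ha, Option.getD_some]
        rw [← hb, htpS l hl, hga]
    have htpnotmem : ∀ l ∈ L₀, tp l ∉ l := by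
      intro l hl hmem
      have hS0 : S (tp l) ≠ 0 := by rw [htpS l hl]; exact hgl0 l hl
      obtain ⟨k, hk, hv, hSv⟩ := chain_pos (hL₀ l hl).2 hmem hS0
      rw [htpS l hl, glast_get (hL₀ l hl).1] at hSv
      have : (⟨k, by omega⟩ : Fin l.length) = ⟨l.length - 1, by omega⟩ :=
        List.nodup_iff_injective_get.mp (hnodupL l hl) hSv.symm
      have : k = l.length - 1 := by simpa using this
      omega
    have hndext : ∀ l ∈ L₀, (ext l).Nodup := by
      intro l hl
      refine List.nodup_append'.mpr ⟨hnodupL l hl, List.nodup_singleton _, ?_⟩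
      intro a ha hb
      simp only [List.mem_singleton] at hb
      exact htpnotmem l hl (hb ▸ ha)
    have hmemext : ∀ l (v : V), v ∈ ext l ↔ v ∈ l ∨ v = tp l := by
      intro l v
      simp [hextdef]
    -- membership in J₁ = L₁.flatten
    have hmemJ₁ : ∀ v : V, v ∈ L₁.flatten ↔ ∃ l ∈ L₀, v ∈ ext l := by
      intro v
      rw [List.mem_flatten]
      constructor
      · rintro ⟨l', hl', hv⟩
        obtain ⟨l, hl, rfl⟩ := List.mem_map.mp hl'
        exact ⟨l, hl, hv⟩
      · rintro ⟨l, hl, hv⟩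
        exact ⟨ext l, List.mem_map.mpr ⟨l, hl, rfl⟩, hv⟩
    have hextlen : ∀ l : List V, (ext l).length = l.length + 1 := by
      intro l; simp [hextdef]
    have hF3' : ∀ l ∈ L₀, ∀ v ∈ ext l, S v ≠ 0 → S v ∈ l := by
      intro l hl v hv hS0
      obtain ⟨k, hk, hv', hSv⟩ := chain_pos (hchext l hl) hv hS0
      have hkl : k < l.length := by rw [hextlen l] at hk; omega
      rw [hSv]
      have hge : (ext l).get ⟨k, by omega⟩ = l.get ⟨k, hkl⟩ := by
        simp only [List.get_eq_getElem]
        exact List.getElem_append_left hkl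
      rw [hge]
      exact List.get_mem _ _
    have hF3 : ∀ v ∈ L₁.flatten, S v ≠ 0 → S v ∈ L₀.flatten := by
      intro v hv hS0
      obtain ⟨l, hl, hvl⟩ := (hmemJ₁ v).mp hv
      exact hJ₀mem l hl _ (hF3' l hl v hvl hS0)
    have hF4 : ∀ v₁ ∈ L₁.flatten, ∀ v₂ ∈ L₁.flatten, S v₁ = S v₂ → S v₁ ≠ 0 → v₁ = v₂ := by
      intro v₁ h₁ v₂ h₂ hS hS0
      obtain ⟨l₁, hl₁, hv₁⟩ := (hmemJ₁ v₁).mp h₁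
      obtain ⟨l₂, hl₂, hv₂⟩ := (hmemJ₁ v₂).mp h₂
      rcases hpair l₁ hl₁ l₂ hl₂ with h | hdisj
      · subst h
        exact chain_inj (hchext l₁ hl₁) (hndext l₁ hl₁) hv₁ hv₂ hS hS0
      · exfalso
        have m₁ := hF3' l₁ hl₁ v₁ hv₁ hS0
        have m₂ := hF3' l₂ hl₂ v₂ hv₂ (hS ▸ hS0)
        rw [hS] at m₁
        exact hdisj m₁ m₂
    have hF5 : ∀ u ∈ L₀.flatten, ∃ v ∈ L₁.flatten, S v = u := by
      intro u hu
      obtain ⟨l, hl, hul⟩ := List.mem_flatten.mp hu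
      rcases chain_surj (hL₀ l hl).2 hul with h | ⟨v, hv, hSv⟩
      · exact ⟨tp l, (hmemJ₁ _).mpr ⟨l, hl, (hmemext l _).mpr (Or.inr rfl)⟩,
          by rw [htpS l hl, ← h]⟩
      · exact ⟨v, (hmemJ₁ _).mpr ⟨l, hl, (hmemext l _).mpr (Or.inl hv)⟩, hSv⟩
    have h0J₁ : (0 : V) ∉ L₁.flatten := by
      intro h0
      obtain ⟨l, hl, h0l⟩ := (hmemJ₁ 0).mp h0
      rcases (hmemext l 0).mp h0l with h | h
      · exact h0J₀ (hJ₀mem l hl _ h)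
      · exact htp0 l hl h.symm
    have hF7 : ∀ v ∈ L₁.flatten, S v = 0 → ∃ l ∈ L₀, v ∈ l.head? := by
      intro v hv hS0
      obtain ⟨l, hl, hvl⟩ := (hmemJ₁ v).mp hv
      obtain ⟨⟨k, hk⟩, rfl⟩ := List.mem_iff_get.mp hvl
      cases k with
      | succ k =>
        exfalso
        have hgs := chain_get_succ (hchext l hl) hk
        rw [hS0] at hgs
        apply h0J₁
        apply (hmemJ₁ 0).mpr
        exact ⟨l, hl, hgs ▸ List.get_mem _ _⟩
      | zero =>
        refine ⟨l, hl, ?_⟩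
        have hlne : l ≠ [] := (hL₀ l hl).1
        have h0l : 0 < l.length := List.length_pos_iff.mpr hlne
        have hge : (ext l).get ⟨0, hk⟩ = l.get ⟨0, h0l⟩ := by
          simp only [List.get_eq_getElem]
          exact List.getElem_append_left h0l
        rw [hge]
        obtain ⟨x, xs, hxl⟩ := List.exists_cons_of_ne_nil hlne
        subst hxl
        simp
    have htpnotJ₀ : ∀ l ∈ L₀, tp l ∉ L₀.flatten := by
      intro l hl hmem
      obtain ⟨l', hl', hvl'⟩ := List.mem_flatten.mp hmem
      have hS0 : S (tp l) ≠ 0 := by rw [htpS l hl]; exact hgl0 l hl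
      obtain ⟨k, hk, hv, hSv⟩ := chain_pos (hL₀ l' hl').2 hvl' hS0
      rw [htpS l hl] at hSv
      rcases hpair l' hl' l hl with h | hdisj
      · subst h
        rw [glast_get (hL₀ l' hl').1] at hSv
        have heq : (⟨l'.length - 1, by omega⟩ : Fin l'.length) = ⟨k, by omega⟩ :=
          List.nodup_iff_injective_get.mp (hnodupL l' hl') hSv
        have : l'.length - 1 = k := by simpa using heq
        omega
      · refine hdisj ?_ (glast_mem (hL₀ l hl).1)
        rw [hSv]
        exact List.get_mem _ _
    -- the kernel part
    set B : Set V := {v : V | ∃ l ∈ L₀, v ∈ l.head?} with hBdef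
    have hBJ₀ : B ⊆ {v : V | v ∈ L₀.flatten} := by
      rintro v ⟨l, hl, hv⟩
      exact hJ₀mem l hl _ (List.mem_of_mem_head? hv)
    have hBker : ∀ v ∈ B, S v = 0 := by
      rintro v ⟨l, hl, hv⟩
      exact (hL₀ l hl).2.1 v hv
    have hBli : LinearIndependent E ((↑) : B → V) := LinearIndepOn.mono (R := E) (v := id) hli₀ hBJ₀
    have hBsub : B ⊆ ↑(LinearMap.ker S ⊓ W) := by
      intro v hv
      rw [SetLike.mem_coe, Submodule.mem_inf]
      exact ⟨LinearMap.mem_ker.mpr (hBker v hv), hUle (hmemU v (hBJ₀ hv))⟩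
    obtain ⟨kb, hkbsub, hBkb, hspkb, hkbli⟩ := exists_linearIndepOn_id_extension hBli hBsub
    have hkbker : ∀ v ∈ kb, S v = 0 := fun v hv =>
      LinearMap.mem_ker.mp (Submodule.mem_inf.mp (hkbsub hv)).1
    have hkbW : ∀ v ∈ kb, v ∈ W := fun v hv => (Submodule.mem_inf.mp (hkbsub hv)).2
    have hkbfin : kb.Finite := LinearIndependent.setFinite hkbli
    set c : Set V := kb \ B with hcdef
    have hcfin : c.Finite := hkbfin.subset Set.diff_subset
    set cL : List V := hcfin.toFinset.toList with hcLdef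
    have hmemcL : ∀ v : V, v ∈ cL ↔ v ∈ c := by
      intro v; rw [hcLdef, Finset.mem_toList, Set.Finite.mem_toFinset]
    set L : List (List V) := L₁ ++ cL.map (fun v => [v]) with hLdef
    have hLflat : L.flatten = L₁.flatten ++ cL := by
      rw [hLdef, List.flatten_append, flatten_singletons]
    have hmemL : ∀ v : V, v ∈ L.flatten ↔ v ∈ L₁.flatten ∨ v ∈ c := by
      intro v; rw [hLflat, List.mem_append, hmemcL]
    have hkbJ : kb ⊆ {v : V | v ∈ L.flatten} := by
      intro v hv
      rw [Set.mem_setOf_eq, hmemL]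
      by_cases hB : v ∈ B
      · obtain ⟨l, hl, hh⟩ := hB
        exact Or.inl ((hmemJ₁ v).mpr ⟨l, hl,
          (hmemext l v).mpr (Or.inl (List.mem_of_mem_head? hh))⟩)
      · exact Or.inr ⟨hv, hB⟩
    -- span of everything is W
    have hsubW : {v : V | v ∈ L.flatten} ⊆ ↑W := by
      intro v hv
      rw [Set.mem_setOf_eq, hmemL] at hv
      rcases hv with hv | hv
      · obtain ⟨l, hl, hvl⟩ := (hmemJ₁ v).mp hv
        rcases (hmemext l v).mp hvl with h | h
        · exact hUle (hmemU v (hJ₀mem l hl v h))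
        · rw [SetLike.mem_coe]; exact h ▸ htpW l hl
      · exact hkbW v hv.1
    have hsple : span E {v : V | v ∈ L.flatten} ≤ W := span_le.mpr hsubW
    refine ⟨L, ?_, ?_, ?_, ?_⟩
    · -- chains
      intro l hl
      rw [hLdef, List.mem_append] at hl
      rcases hl with hl | hl
      · obtain ⟨l₀, hl₀, rfl⟩ := List.mem_map.mp hl
        exact ⟨by simp [hextdef], hchext l₀ hl₀⟩
      · obtain ⟨v, hv, rfl⟩ := List.mem_map.mp hl
        refine ⟨by simp, ?_, List.isChain_singleton _⟩
        intro a ha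
        simp only [List.head?_cons, Option.mem_some_iff] at ha
        subst ha
        exact hkbker _ ((hmemcL _).mp hv).1
    · -- nodup
      rw [hLflat]
      refine List.nodup_append'.mpr ⟨?_, Finset.nodup_toList _, ?_⟩
      · refine List.nodup_flatten.mpr ⟨?_, ?_⟩
        · intro l hl; obtain ⟨l₀, hl₀, rfl⟩ := List.mem_map.mp hl; exact hndext l₀ hl₀
        · rw [hL₁def, List.pairwise_map]
          have hpw : List.Pairwise List.Disjoint L₀ := (List.nodup_flatten.mp hnd₀).2
          refine hpw.imp_of_mem ?_
          intro l₁ l₂ h₁ h₂ hd a ha₁ ha₂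
          rcases (hmemext l₁ a).mp ha₁ with h | h
          · rcases (hmemext l₂ a).mp ha₂ with h' | h'
            · exact hd h h'
            · exact htpnotJ₀ l₂ h₂ (hJ₀mem l₁ h₁ _ (h' ▸ h))
          · rcases (hmemext l₂ a).mp ha₂ with h' | h'
            · exact htpnotJ₀ l₁ h₁ (hJ₀mem l₂ h₂ _ (h ▸ h'))
            · have hts : tp l₁ = tp l₂ := h ▸ h'
              have hgg : glast l₁ = glast l₂ := by
                rw [← htpS l₁ h₁, ← htpS l₂ h₂, hts]
              exact hd (glast_mem (hL₀ l₁ h₁).1) (hgg ▸ glast_mem (hL₀ l₂ h₂).1)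
      · intro a ha hb
        have hac : a ∈ c := (hmemcL a).mp hb
        have hS0 : S a = 0 := hkbker a hac.1
        obtain ⟨l, hl, hh⟩ := hF7 a ha hS0
        exact hac.2 ⟨l, hl, hh⟩
    · -- linear independence
      set Nset : Set V := {v : V | v ∈ L₁.flatten ∧ S v ≠ 0} with hNdef
      have hseteq : {v : V | v ∈ L.flatten} = kb ∪ Nset := by
        ext v
        simp only [Set.mem_setOf_eq, hmemL, Set.mem_union, hNdef]
        constructor
        · rintro (hv | hv)
          · by_cases h0 : S v = 0
            · left; obtain ⟨l, hl, hh⟩ := hF7 v hv h0; exact hBkb ⟨l, hl, hh⟩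
            · right; exact ⟨hv, h0⟩
          · left; exact hv.1
        · rintro (hv | hv)
          · exact (hmemL v).mp (hkbJ hv)
          · left; exact hv.1
      rw [hseteq]
      have hSN : ∀ v : ↥Nset, S ↑v ∈ {v : V | v ∈ L₀.flatten} := fun v => hF3 _ v.2.1 v.2.2
      have hNli : LinearIndependent E ((↑) : Nset → V) := by
        apply li_of_comp_sl S hσinj
        have hcomp : (fun v : ↥Nset => S ↑v) =
            (fun u : {v : V | v ∈ L₀.flatten} => (u : V)) ∘ (fun v : ↥Nset => ⟨S ↑v, hSN v⟩) :=
          rfl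
        rw [hcomp]
        apply hli₀.comp
        intro v₁ v₂ h
        have hSv : S ↑v₁ = S ↑v₂ := congrArg Subtype.val h
        exact Subtype.ext (hF4 _ v₁.2.1 _ v₂.2.1 hSv v₁.2.2)
      have hNfin : Nset.Finite := (List.finite_toSet L₁.flatten).subset (fun v hv => hv.1)
      have hdisj : Disjoint (span E kb) (span E Nset) := by
        rw [disjoint_def]
        intro z hzkb hzN
        have hz0 : S z = 0 := by
          have hker : span E kb ≤ LinearMap.ker S :=
            span_le.mpr (fun v hv => LinearMap.mem_ker.mpr (hkbker v hv))
          exact LinearMap.mem_ker.mp (hker hzkb)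
        rw [show Nset = ↑hNfin.toFinset by simp] at hzN
        obtain ⟨f, -, hf⟩ := mem_span_finset.mp hzN
        set T := hNfin.toFinset with hTdef
        have hTN : ∀ v ∈ T, v ∈ Nset := by
          intro v hv; rwa [hTdef, Set.Finite.mem_toFinset] at hv
        have hSz : ∑ v ∈ T, σr (f v) • S v = 0 := by
          have hSsum : S (∑ v ∈ T, f v • v) = 0 := by rw [hf, hz0]
          rw [map_sum] at hSsum
          simpa [LinearMap.map_smulₛₗ] using hSsum
        have hinjT : Set.InjOn S ↑T := by
          intro v₁ h₁ v₂ h₂ h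
          have h₁' := hTN v₁ h₁
          have h₂' := hTN v₂ h₂
          exact hF4 v₁ h₁'.1 v₂ h₂'.1 h h₁'.2
        set g : V → E := fun u => σr (f (Function.invFunOn S ↑T u)) with hgdef
        have hsum : ∑ u ∈ T.image S, g u • u = 0 := by
          rw [Finset.sum_image (fun x hx y hy h => hinjT hx hy h)]
          rw [← hSz]
          apply Finset.sum_congr rfl
          intro v hv
          have hinv : Function.invFunOn S ↑T (S v) = v :=
            hinjT.leftInvOn_invFunOn (by simpa using hv)
          rw [hgdef]
          simp only
          rw [hinv]
        have hTim : ↑(T.image S) ⊆ {v : V | v ∈ L₀.flatten} := by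
          intro u hu
          simp only [Finset.coe_image, Set.mem_image] at hu
          obtain ⟨v, hv, rfl⟩ := hu
          have hv' := hTN v (by simpa using hv)
          exact hF3 v hv'.1 hv'.2
        have hg0 := L3 hli₀ (T.image S) hTim g hsum
        have hf0 : ∀ v ∈ T, f v = 0 := by
          intro v hv
          have hgv := hg0 (S v) (Finset.mem_image_of_mem S hv)
          rw [hgdef] at hgv
          simp only at hgv
          rw [hinjT.leftInvOn_invFunOn (by simpa using hv)] at hgv
          exact hσinj (by simpa using hgv)
        rw [← hf]
        apply Finset.sum_eq_zero
        intro v hv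
        rw [hf0 v hv, zero_smul]
      exact LinearIndepOn.union (v := id) hkbli hNli (by simpa only [Set.image_id] using hdisj)
    · -- span
      refine le_antisymm hsple ?_
      intro w hw
      have hSwU : S w ∈ U := Submodule.mem_map_of_mem hw
      have hSw : S w ∈ span E {v : V | v ∈ L₀.flatten} := hsp₀ ▸ hSwU
      have hJsub : {v : V | v ∈ L₀.flatten} ⊆ S '' {v : V | v ∈ L.flatten} := by
        intro u hu
        obtain ⟨v, hv, hSv⟩ := hF5 u hu
        exact ⟨v, (hmemL v).mpr (Or.inl hv), hSv⟩
      have hSw2 : S w ∈ Submodule.map S (span E {v : V | v ∈ L.flatten}) := by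
        rw [Submodule.map_span]
        exact span_mono hJsub hSw
      obtain ⟨v, hvP, hSv⟩ := Submodule.mem_map.mp hSw2
      have hd : w - v ∈ LinearMap.ker S ⊓ W := by
        rw [Submodule.mem_inf, LinearMap.mem_ker]
        exact ⟨by rw [map_sub, hSv, sub_self], W.sub_mem hw (hsple hvP)⟩
      have hdsp : w - v ∈ span E {v : V | v ∈ L.flatten} :=
        span_le.mpr (Set.Subset.trans hkbJ subset_span ) (hspkb hd)
      have hw' : w = (w - v) + v := by abel
      rw [hw']
      exact Submodule.add_mem _ hdsp hvP


def goodL (S : V →ₛₗ[σr] V) (J : List V) : Prop :=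
  ∀ k (h : k < J.length), S (J.get ⟨k, h⟩) = 0 ∨
    ∃ _ : 1 ≤ k, S (J.get ⟨k, h⟩) = J.get ⟨k - 1, by omega⟩

lemma chain_good {S : V →ₛₗ[σr] V} {l : List V} (hc : chainP S l) : goodL S l := by
  intro k h
  cases k with
  | zero => exact Or.inl (chain_get0 hc h)
  | succ k =>
    refine Or.inr ⟨by omega, ?_⟩
    exact chain_get_succ hc h

lemma good_append {S : V →ₛₗ[σr] V} {A B : List V} (hA : goodL S A) (hB : goodL S B) :
    goodL S (A ++ B) := by
  intro k h
  have hlen : (A ++ B).length = A.length + B.length := List.length_append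
  by_cases hk : k < A.length
  · have e1 : (A ++ B).get ⟨k, h⟩ = A.get ⟨k, hk⟩ := by
      simp only [List.get_eq_getElem]
      exact List.getElem_append_left hk
    rcases hA k hk with h0 | ⟨h1, hs⟩
    · exact Or.inl (by rw [e1]; exact h0)
    · refine Or.inr ⟨h1, ?_⟩
      have e2 : (A ++ B).get ⟨k - 1, by omega⟩ = A.get ⟨k - 1, by omega⟩ := by
        simp only [List.get_eq_getElem]
        exact List.getElem_append_left (by omega)
      rw [e1, e2]
      exact hs
  · have hk' : A.length ≤ k := by omega
    have hkB : k - A.length < B.length := by rw [hlen] at h; omega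
    have e1 : (A ++ B).get ⟨k, h⟩ = B.get ⟨k - A.length, hkB⟩ := by
      simp only [List.get_eq_getElem]
      exact List.getElem_append_right hk'
    rcases hB (k - A.length) hkB with h0 | ⟨h1, hs⟩
    · exact Or.inl (by rw [e1]; exact h0)
    · refine Or.inr ⟨by omega, ?_⟩
      have e2 : (A ++ B).get ⟨k - 1, by omega⟩ = B.get ⟨k - 1 - A.length, by omega⟩ := by
        simp only [List.get_eq_getElem]
        exact List.getElem_append_right (by omega)
      rw [e1, e2]
      have : k - 1 - A.length = k - A.length - 1 := by omega
      rw [hs]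
      congr 1
      ext
      simp [this]

lemma good_flatten {S : V →ₛₗ[σr] V} {L : List (List V)} (h : ∀ l ∈ L, chainP S l) :
    goodL S L.flatten := by
  induction L with
  | nil => intro k hk; simp at hk
  | cons l t ih =>
    rw [List.flatten_cons]
    exact good_append (chain_good (h l (by simp))) (ih (fun l' hl' => h l' (by simp [hl'])))

variable [FiniteDimensional E V]

theorem jordan_semilinear [RingHomSurjective σr] (hσinj : Function.Injective σr)
    (S : V →ₛₗ[σr] V) (hnil : ∃ N, ∀ v : V, S^[N] v = 0) (n : ℕ) (hn : finrank E V = n) :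
    ∃ b : Basis (Fin n) E V, ∀ j : Fin n, S (b j) = 0 ∨
      ∃ _ : 1 ≤ (j : ℕ), S (b j) = b ⟨(j : ℕ) - 1, by omega⟩ := by
  obtain ⟨L, hch, hnd, hli, hsp⟩ := exists_chains hσinj S hnil (finrank E ↥(⊤ : Submodule E V))
    ⊤ (fun v _ => trivial) le_rfl
  set J := L.flatten with hJdef
  have hinj : Function.Injective J.get := List.nodup_iff_injective_get.mp hnd
  have hrange : Set.range J.get = {v : V | v ∈ J} := by
    ext v
    simp [Set.mem_range, List.mem_iff_get, eq_comm]
  have hfli : LinearIndependent E J.get :=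
    (linearIndepOn_id_range_iff hinj).mp (by rw [hrange]; exact hli)
  have hspan : ⊤ ≤ span E (Set.range J.get) := by
    rw [hrange, hsp]
  set b0 : Basis (Fin J.length) E V := Basis.mk hfli hspan with hb0def
  have hlen : J.length = n := by
    rw [← hn, finrank_eq_card_basis b0, Fintype.card_fin]
  set b : Basis (Fin n) E V := b0.reindex (finCongr hlen) with hbdef
  have hbj : ∀ j : Fin n, b j = J.get ⟨(j : ℕ), by omega⟩ := by
    intro j
    rw [hbdef, Module.Basis.reindex_apply, hb0def, Basis.coe_mk]
    congr 1
  refine ⟨b, ?_⟩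
  intro j
  have hgood := good_flatten (fun l hl => (hch l hl).2) (j : ℕ) (by show (j : ℕ) < J.length; omega)
  rcases hgood with h0 | ⟨h1, hs⟩
  · exact Or.inl (by rw [hbj j]; exact h0)
  · refine Or.inr ⟨h1, ?_⟩
    rw [hbj j, hbj ⟨(j : ℕ) - 1, by omega⟩]
    exact hs
end

section MatrixEnd
open Matrix

lemma nilp_superdiag {E : Type} [Field E] {n : ℕ} (M : Matrix (Fin n) (Fin n) E)
    (h : ∀ i j, M i j ≠ 0 → (j : ℕ) = (i : ℕ) + 1) : M ^ n = 0 := by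
  have key : ∀ k (i j : Fin n), (M ^ k) i j ≠ 0 → (j : ℕ) = (i : ℕ) + k := by
    intro k
    induction k with
    | zero =>
      intro i j h0
      rw [pow_zero] at h0
      by_contra hne
      exact h0 (Matrix.one_apply_ne (fun he => hne (by rw [he]; omega)))
    | succ k ih =>
      intro i j h0
      rw [pow_succ, Matrix.mul_apply] at h0
      obtain ⟨l, _, hl⟩ := Finset.exists_ne_zero_of_sum_ne_zero h0
      have h1 : (M ^ k) i l ≠ 0 := fun hz => hl (by rw [hz, zero_mul])
      have h2 : M l j ≠ 0 := fun hz => hl (by rw [hz, mul_zero])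
      have e1 := ih i l h1
      have e2 := h l j h2
      omega
  ext i j
  simp only [Matrix.zero_apply]
  by_contra h0
  have := key n i j h0
  have := j.isLt
  omega

/-- Guo's lemma: if `x x̄` is nilpotent then some twisted
conjugate `a x ā⁻¹` (with `a ∈ GL_n(E)`) is in Jordan normal form: it is
nilpotent, all its entries lie in `F`, every entry is `0` or `1`, and nonzero
entries occur only in positions `(i, i+1)`. -/
theorem stmt_12 (F E : Type) [Field F] [CharZero F] [Field E] [Algebra F E]
    (δ : E) (hδ : δ ∉ Set.range (algebraMap F E)) (hδ2 : δ ^ 2 ∈ Set.range (algebraMap F E))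
    (σ : E ≃ₐ[F] E) (hσδ : σ δ = -δ) (hσσ : ∀ x : E, σ (σ x) = x)
    (hfix : ∀ x : E, σ x = x → x ∈ Set.range (algebraMap F E))
    (n : ℕ) :
    ∀ x : Matrix (Fin n) (Fin n) E, IsNilpotent (x * x.map σ) →
      ∃ a : Matrix (Fin n) (Fin n) E, IsUnit a ∧
        IsNilpotent (a * x * (a.map σ)⁻¹) ∧
        (∀ i j, (a * x * (a.map σ)⁻¹) i j ∈ Set.range (algebraMap F E)) ∧
        (∀ i j, (a * x * (a.map σ)⁻¹) i j = 0 ∨ (a * x * (a.map σ)⁻¹) i j = 1) ∧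
        (∀ i j, (a * x * (a.map σ)⁻¹) i j ≠ 0 → (j : ℕ) = (i : ℕ) + 1) := by
  intro x hx
  classical
  set σr : E →+* E := σ.toAlgHom.toRingHom with hσrdef
  have hσr : ∀ a : E, σr a = σ a := fun a => rfl
  have hco : (⇑σr : E → E) = ⇑σ := funext hσr
  have hσinj : Function.Injective σr := by
    intro a b hab
    rw [hσr, hσr] at hab
    rw [← hσσ a, ← hσσ b, hab]
  haveI : RingHomSurjective σr := ⟨fun a => ⟨σ a, by rw [hσr]; exact hσσ a⟩⟩
  set S : (Fin n → E) →ₛₗ[σr] (Fin n → E) :=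
    { toFun := fun v => x.mulVec (fun i => σ (v i))
      map_add' := by
        intro v w
        show x.mulVec (fun i => σ ((v + w) i)) =
          x.mulVec (fun i => σ (v i)) + x.mulVec (fun i => σ (w i))
        have he : (fun i => σ ((v + w) i)) = (fun i => σ (v i)) + (fun i => σ (w i)) := by
          funext i; simp
        rw [he, Matrix.mulVec_add]
      map_smul' := by
        intro c v
        show x.mulVec (fun i => σ ((c • v) i)) = σr c • x.mulVec (fun i => σ (v i))
        have he : (fun i => σ ((c • v) i)) = σ c • (fun i => σ (v i)) := by
          funext i; simp [smul_eq_mul]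
        rw [he, Matrix.mulVec_smul]
        rfl } with hSdef
  have hSapp : ∀ v, S v = x.mulVec (fun i => σ (v i)) := fun v => rfl
  have hSS : ∀ v, S (S v) = (x * x.map ⇑σ).mulVec v := by
    intro v
    rw [hSapp, hSapp]
    have he : (fun i => σ ((x.mulVec fun k => σ (v k)) i)) = (x.map ⇑σ).mulVec v := by
      funext i
      simp only [Matrix.mulVec, dotProduct, Matrix.map_apply]
      rw [map_sum]
      refine Finset.sum_congr rfl ?_
      intro j _
      rw [_root_.map_mul, hσσ]
    rw [he, Matrix.mulVec_mulVec]
  obtain ⟨m, hm⟩ := hx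
  have hiter : ∀ k (v : Fin n → E), S^[2 * k] v = ((x * x.map ⇑σ) ^ k).mulVec v := by
    intro k
    induction k with
    | zero => intro v; simp [Matrix.one_mulVec]
    | succ k ih =>
      intro v
      have e : 2 * (k + 1) = 2 + 2 * k := by ring
      rw [e, Function.iterate_add_apply, ih]
      show S (S _) = _
      rw [hSS, Matrix.mulVec_mulVec, ← pow_succ']
  have hnil : ∃ N, ∀ v : Fin n → E, S^[N] v = 0 :=
    ⟨2 * m, fun v => by rw [hiter m v, hm, Matrix.zero_mulVec]⟩
  obtain ⟨b, hb⟩ := jordan_semilinear hσinj S hnil n (Module.finrank_fin_fun E)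
  set P : Matrix (Fin n) (Fin n) E := Matrix.of fun i j => b j i with hPdef
  have hPbm : P = (Pi.basisFun E (Fin n)).toMatrix ⇑b := by
    ext i j
    rw [Basis.toMatrix_apply, Pi.basisFun_repr]
    rfl
  have hPu : IsUnit P := by
    rw [hPbm]
    letI := (Pi.basisFun E (Fin n)).invertibleToMatrix b
    exact isUnit_of_invertible _
  have hPdetu : IsUnit P.det := (Matrix.isUnit_iff_isUnit_det P).mp hPu
  have hPσdetu : IsUnit (P.map ⇑σ).det := by
    have : σr P.det = (P.map ⇑σ).det := by
      rw [RingHom.map_det, RingHom.mapMatrix_apply, hco]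
    rw [← this]
    exact hPdetu.map σr
  set M : Matrix (Fin n) (Fin n) E := Matrix.of fun i j => (b.repr (S (b j))) i with hMdef
  have hkey : x * P.map ⇑σ = P * M := by
    ext i j
    rw [Matrix.mul_apply, Matrix.mul_apply]
    have hL : ∑ k, x i k * (P.map ⇑σ) k j = S (b j) i := by
      rw [hSapp]
      simp only [Matrix.mulVec, dotProduct, Matrix.map_apply, hPdef, Matrix.of_apply]
    have hR : ∑ k, P i k * M k j = S (b j) i := by
      have : ∀ k, P i k * M k j = ((b.repr (S (b j))) k • b k) i := by
        intro k
        simp only [hPdef, hMdef, Matrix.of_apply, Pi.smul_apply, smul_eq_mul]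
        ring
      rw [Finset.sum_congr rfl (fun k _ => this k), ← Finset.sum_apply i Finset.univ
        (fun k => (b.repr (S (b j))) k • b k), Basis.sum_repr]
    rw [hL, hR]
  refine ⟨P⁻¹, ?_, ?_⟩
  · -- IsUnit P⁻¹
    have hdet : IsUnit (P⁻¹).det := by
      rw [Matrix.det_nonsing_inv]
      obtain ⟨u, hu⟩ := hPdetu
      rw [← hu, Ring.inverse_unit]
      exact u⁻¹.isUnit
    exact (Matrix.isUnit_iff_isUnit_det _).mpr hdet
  · have haMσ : (P⁻¹).map ⇑σ = (P.map ⇑σ)⁻¹ := by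
      refine (Matrix.inv_eq_left_inv ?_).symm
      rw [← hco, ← Matrix.map_mul, Matrix.nonsing_inv_mul P hPdetu]
      exact Matrix.map_one _ (map_zero σr) (map_one σr)
    have hinv2 : ((P⁻¹).map ⇑σ)⁻¹ = P.map ⇑σ := by
      rw [haMσ]
      exact Matrix.nonsing_inv_nonsing_inv _ hPσdetu
    have heq : P⁻¹ * x * ((P⁻¹).map ⇑σ)⁻¹ = M := by
      rw [hinv2, Matrix.mul_assoc, hkey, ← Matrix.mul_assoc,
        Matrix.nonsing_inv_mul P hPdetu, Matrix.one_mul]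
    rw [heq]
    have hdetail : ∀ i j, M i j = 0 ∨ (M i j = 1 ∧ (j : ℕ) = (i : ℕ) + 1) := by
      intro i j
      rcases hb j with h0 | ⟨h1, hs⟩
      · left
        rw [hMdef]
        simp [h0]
      · rw [hMdef]
        simp only [Matrix.of_apply, hs, Basis.repr_self]
        rw [Finsupp.single_apply]
        by_cases hij : (⟨(j : ℕ) - 1, by omega⟩ : Fin n) = i
        · right
          refine ⟨by simp [hij], ?_⟩
          have hval := congrArg Fin.val hij
          simp only [] at hval
          omega
        · left
          simp [hij]
    refine ⟨⟨n, nilp_superdiag M ?_⟩, ?_, ?_, ?_⟩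
    · intro i j hne
      rcases hdetail i j with h | h
      · exact absurd h hne
      · exact h.2
    · intro i j
      rcases hdetail i j with h | h
      · exact ⟨0, by rw [map_zero, h]⟩
      · exact ⟨1, by rw [_root_.map_one, h.1]⟩
    · intro i j
      rcases hdetail i j with h | h
      · exact Or.inl h
      · exact Or.inr h.1
    · intro i j hne
      rcases hdetail i j with h | h
      · exact absurd h hne
      · exact h.2
end MatrixEnd
end
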